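/- arXiv:2306.07331 — 5 statements merged into one kernel-verified Lean document; each statement's English description precedes it below -/
import Mathlib

section
/- For every real ε > 0 there exists N such that for every integer n ≥ N and every integer ℓ with 1 ≤ ℓ ≤ n - 1, one has |(n · Orb(n,ℓ)) / C(n,ℓ) - 1| < ε (as real numbers). In other words, the normalized orbit count F = n·Orb(n,ℓ)/C(n,ℓ) tends to 1 as n → ∞, uniformly over 1 ≤ ℓ ≤ n - 1. -/
/-!
By Burnside's lemma `n·Orb(n,ℓ) = ∑ₖ Fix(n,ℓ,k)`, and the term `k = 0` is `C(n,ℓ)`. A configuration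
fixed by `k ≠ 0` is constant on the cosets of `⟨k⟩`, a subgroup of order `t ≥ 2` and index
`d = n / t`, so it is pulled back from a configuration on `d` sites with `m = ℓ / t` ones; hence
`Fix(n,ℓ,k) ≤ C(d,m)`. Vandermonde gives `C(d,m)^t ≤ C(n,ℓ)` and `0 < m < d` gives `d ≤ C(d,m)`, so
`Fix(n,ℓ,k) · d^(t-1) ≤ C(n,ℓ)`. This is `≤ 32·C(n,ℓ)/n²` when `t ≥ 3`, and `≤ 2·C(n,ℓ)/n` for the
only element of order `2`; therefore `0 ≤ n·Orb(n,ℓ)/C(n,ℓ) - 1 ≤ 34/n`.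
-/

/-- Rotation of a configuration `v : ZMod n → Bool` by `k`: `(k • v) i = v (i - k)`. -/
def rot (n : ℕ) (k : ZMod n) (v : ZMod n → Bool) : ZMod n → Bool :=
  fun i => v (i - k)

/-- The set of configurations with exactly `ℓ` entries equal to `true`. -/
def Sconf (n ℓ : ℕ) [NeZero n] : Finset (ZMod n → Bool) :=
  Finset.univ.filter fun v => (Finset.univ.filter fun i => v i = true).card = ℓ

/-- The rotation orbit of a configuration. -/
def orbitOf (n : ℕ) [NeZero n] (v : ZMod n → Bool) : Finset (ZMod n → Bool) :=
  Finset.univ.image fun k : ZMod n => rot n k v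

/-- The number of rotation orbits on `Sconf n ℓ`. -/
def Orb (n ℓ : ℕ) [NeZero n] : ℕ := ((Sconf n ℓ).image (orbitOf n)).card

/-- The number of configurations in `Sconf n ℓ` fixed by rotation by `k`. -/
def FixCount (n ℓ : ℕ) [NeZero n] (k : ZMod n) : ℕ :=
  ((Sconf n ℓ).filter fun v => rot n k v = v).card

open Finset AddAction

section Burnside

variable {G X : Type*} [AddGroup G] [Fintype G] [AddAction G X] [DecidableEq X]

theorem coe_image_vadd (x : X) : (univ.image (· +ᵥ x : G → X) : Set X) = orbit G x := by
  rw [coe_image, coe_univ, Set.image_univ]; rfl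

theorem card_image_vadd_mul_card_stabilizer (x : X) :
    #(univ.image (· +ᵥ x : G → X)) * #{g : G | g +ᵥ x = x} = Fintype.card G := by
  rw [← Nat.card_eq_fintype_card, ← (stabilizer G x).index_mul_card, index_stabilizer,
    ← coe_image_vadd, Set.ncard_coe_finset, Nat.card_eq_fintype_card, Fintype.card_subtype]
  rfl

theorem sum_card_fixedBy_eq_card_orbits_mul_card (s : Finset X)
    (hs : ∀ g : G, ∀ x ∈ s, g +ᵥ x ∈ s) :
    ∑ g : G, #{x ∈ s | g +ᵥ x = x} =
      #(s.image fun x => univ.image (· +ᵥ x : G → X)) * Fintype.card G := by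
  set orb : X → Finset X := fun x => univ.image (· +ᵥ x : G → X)
  have h := sum_card_bipartiteAbove_eq_sum_card_bipartiteBelow (s := univ) (t := s)
    (r := fun (g : G) x => g +ᵥ x = x)
  simp only [bipartiteAbove, bipartiteBelow] at h
  rw [h, ← sum_fiberwise_of_maps_to fun x hx => mem_image_of_mem orb hx, card_eq_sum_ones,
    sum_mul]
  refine sum_congr rfl fun O hO => ?_
  obtain ⟨x, hx, rfl⟩ := mem_image.1 hO
  have orb_eq_iff : ∀ y, orb y = orb x ↔ y ∈ orb x := fun y => by
    rw [← coe_inj, ← mem_coe, coe_image_vadd, coe_image_vadd, orbit_eq_iff]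
  have fiber : {y ∈ s | orb y = orb x} = orb x := by
    ext y
    rw [mem_filter, orb_eq_iff, and_iff_right_iff_imp]
    intro hy
    obtain ⟨g, -, rfl⟩ := mem_image.1 hy
    exact hs g x hx
  have hpos : 0 < #(orb x) := card_pos.2 ⟨x, mem_image.2 ⟨0, mem_univ _, zero_vadd G x⟩⟩
  refine Nat.eq_of_mul_eq_mul_left hpos ?_
  rw [fiber, mul_sum, one_mul, ← card_image_vadd_mul_card_stabilizer x, sum_const_nat]
  intro y hy
  rw [← (orb_eq_iff y).2 hy, card_image_vadd_mul_card_stabilizer,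
    card_image_vadd_mul_card_stabilizer]

end Burnside

section Binomial

theorem card_filter_card_eq_choose (α : Type*) [Fintype α] [DecidableEq α] (m : ℕ) :
    #{v : α → Bool | #{i | v i = true} = m} = (Fintype.card α).choose m := by
  rw [← card_univ, ← card_powersetCard]
  refine card_bij' (fun v _ => ({i | v i = true} : Finset α)) (fun s _ i => decide (i ∈ s))
    ?_ ?_ ?_ ?_
  · intro v hv; simpa using hv
  · intro s hs; simpa using hs
  · intro v _; funext i; simp
  · intro s _; ext i; simp

theorem Nat.choose_mul_choose_le_add_choose (a b c d : ℕ) :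
    a.choose b * c.choose d ≤ (a + c).choose (b + d) := by
  rw [Nat.add_choose_eq]
  exact single_le_sum (f := fun ij : ℕ × ℕ => a.choose ij.1 * c.choose ij.2)
    (fun _ _ => Nat.zero_le _) (a := (b, d)) (mem_antidiagonal.2 rfl)

theorem Nat.choose_pow_le_choose_mul_mul (d m t : ℕ) :
    d.choose m ^ t ≤ (d * t).choose (m * t) := by
  induction t with
  | zero => simp
  | succ t ih =>
    calc d.choose m ^ (t + 1) = (d.choose m ^ t) * d.choose m := pow_succ _ _
      _ ≤ (d * t).choose (m * t) * d.choose m := Nat.mul_le_mul_right _ ih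
      _ ≤ (d * (t + 1)).choose (m * (t + 1)) := Nat.choose_mul_choose_le_add_choose _ _ _ _

theorem Nat.le_choose_of_pos_of_lt {d m : ℕ} (hm : 0 < m) (hmd : m < d) : d ≤ d.choose m := by
  induction d generalizing m with
  | zero => omega
  | succ d ih =>
    obtain ⟨m, rfl⟩ := Nat.exists_eq_add_of_lt hm
    rw [zero_add, Nat.choose_succ_succ']
    rcases Nat.eq_zero_or_pos m with rfl | hm'
    · simp
    · have := ih hm' (by omega)
      have := Nat.choose_pos (n := d) (k := m + 1) (by omega)
      omega

theorem sq_mul_le_pow {d t : ℕ} (hd : 2 ≤ d) (ht : 3 ≤ t) : (d * t) ^ 2 ≤ 32 * d ^ (t - 1) := by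
  obtain ⟨s, rfl⟩ := Nat.exists_eq_add_of_le ht
  have hs : (3 + s) ^ 2 ≤ 32 * 2 ^ s := by
    clear ht
    induction s with
    | zero => norm_num
    | succ s ih => have := s.lt_two_pow_self; rw [pow_succ 2 s]; nlinarith
  calc (d * (3 + s)) ^ 2 = d ^ 2 * (3 + s) ^ 2 := by ring
    _ ≤ d ^ 2 * (32 * d ^ s) :=
        Nat.mul_le_mul_left _ (hs.trans (Nat.mul_le_mul_left _ (Nat.pow_le_pow_left hd s)))
    _ = 32 * d ^ (3 + s - 1) := by rw [show 3 + s - 1 = 2 + s by omega, pow_add]; ring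

end Binomial

section Quotient

variable {G : Type*} [AddGroup G] [Fintype G] {H : AddSubgroup G} [H.Normal]
  [Fintype (G ⧸ H)] [DecidableEq (G ⧸ H)]

theorem card_filter_comp_mk (w : G ⧸ H → Bool) :
    #{g : G | w g = true} = Nat.card H * #{q | w q = true} := by
  have fiber (g : G) : #{x : G | (x : G ⧸ H) = g} = Nat.card H := by
    classical
    refine (AddMonoidHom.card_fiber_eq_of_mem_range (QuotientAddGroup.mk' H) ⟨g, rfl⟩
      ⟨0, rfl⟩).trans ?_
    rw [Nat.card_eq_fintype_card, Fintype.card_subtype]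
    simp [QuotientAddGroup.eq_zero_iff]
  rw [card_eq_sum_card_fiberwise (f := ((↑) : G → G ⧸ H)) (t := {q | w q = true})
    fun g hg => by simpa using hg]
  rw [sum_congr rfl fun q hq => ?_, sum_const, smul_eq_mul, mul_comm]
  obtain ⟨g, rfl⟩ := QuotientAddGroup.mk_surjective q
  rw [filter_filter, ← fiber g]
  exact congrArg card
    (filter_congr fun x _ => and_iff_right_of_imp fun hx => hx ▸ by simpa using hq)

end Quotient

instance rotAddAction (n : ℕ) : AddAction (ZMod n) (ZMod n → Bool) where
  vadd := rot n
  zero_vadd v := funext fun i => congrArg v (sub_zero i)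
  add_vadd k k' v := funext fun i => congrArg v (sub_add_eq_sub_sub i k k')

section Rotation

open AddSubgroup

variable {n ℓ : ℕ}

theorem apply_eq_of_sub_mem_zmultiples {k : ZMod n} {v : ZMod n → Bool} (hv : k +ᵥ v = v)
    {i j : ZMod n} (hij : i - j ∈ zmultiples k) : v i = v j := by
  have : (i - j) +ᵥ v = v :=
    mem_stabilizer_iff.1 (zmultiples_le.2 (mem_stabilizer_iff.2 hv) hij)
  calc v i = ((i - j) +ᵥ v) i := (congrFun this i).symm
    _ = v j := congrArg v (sub_sub_cancel i j)

theorem apply_out_mk {k : ZMod n} {v : ZMod n → Bool} (hv : k +ᵥ v = v) (g : ZMod n) :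
    v (g : ZMod n ⧸ zmultiples k).out = v g := by
  refine apply_eq_of_sub_mem_zmultiples hv ?_
  have := QuotientAddGroup.eq.1 (QuotientAddGroup.out_eq' (g : ZMod n ⧸ zmultiples k)).symm
  rwa [neg_add_eq_sub] at this

variable [NeZero n]

theorem div_addOrderOf_mul (k : ZMod n) : n / addOrderOf k * addOrderOf k = n :=
  Nat.div_mul_cancel (by simpa using _root_.addOrderOf_dvd_natCard k)

theorem natCard_quotient_zmultiples (k : ZMod n) :
    Nat.card (ZMod n ⧸ zmultiples k) = n / addOrderOf k := by
  refine Nat.eq_div_of_mul_eq_left (addOrderOf_pos k).ne' ?_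
  rw [← index_eq_card, ← Nat.card_zmultiples, index_mul_card, Nat.card_zmod]

theorem vadd_mem_Sconf (k : ZMod n) {v : ZMod n → Bool} (hv : v ∈ Sconf n ℓ) :
    k +ᵥ v ∈ Sconf n ℓ := by
  simp only [Sconf, mem_filter, mem_univ, true_and] at hv ⊢
  rw [← hv]
  exact card_equiv (Equiv.subRight k) fun i => by simp; rfl

theorem mul_orb_eq_sum_fixCount (ℓ : ℕ) : n * Orb n ℓ = ∑ k, FixCount n ℓ k := by
  have h := sum_card_fixedBy_eq_card_orbits_mul_card (G := ZMod n) (Sconf n ℓ) vadd_mem_Sconf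
  rw [ZMod.card, mul_comm] at h
  exact h.symm

theorem fixCount_zero (ℓ : ℕ) : FixCount n ℓ 0 = n.choose ℓ := by
  rw [FixCount, filter_true_of_mem (p := fun v => rot n 0 v = v) fun v _ => zero_vadd (ZMod n) v,
    Sconf, card_filter_card_eq_choose, ZMod.card]

theorem fixCount_le_card_filter (k : ZMod n) [Fintype (ZMod n ⧸ zmultiples k)]
    [DecidableEq (ZMod n ⧸ zmultiples k)] :
    FixCount n ℓ k ≤
      #{w : ZMod n ⧸ zmultiples k → Bool | addOrderOf k * #{q | w q = true} = ℓ} := by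
  refine card_le_card_of_injOn (fun v q => v q.out) (fun v hv => ?_) fun v₁ hv₁ v₂ hv₂ h => ?_
  · simp only [coe_filter, Sconf, mem_filter, mem_univ, true_and, Set.mem_ofPred_eq] at hv ⊢
    rw [← Nat.card_zmultiples, ← card_filter_comp_mk, ← hv.1]
    simp only [apply_out_mk hv.2]
  · simp only [coe_filter, Set.mem_ofPred_eq] at hv₁ hv₂
    funext g
    rw [← apply_out_mk hv₁.2, ← apply_out_mk hv₂.2]
    exact congrFun h _

theorem exists_fixCount_le_choose {k : ZMod n} (hF : FixCount n ℓ k ≠ 0) :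
    ∃ m, ℓ = addOrderOf k * m ∧ FixCount n ℓ k ≤ (n / addOrderOf k).choose m := by
  classical
  have hle := fixCount_le_card_filter (ℓ := ℓ) k
  obtain ⟨w, hw⟩ := card_pos.1 (hle.trans_lt' (Nat.pos_of_ne_zero hF))
  have hw := (mem_filter.1 hw).2
  refine ⟨#{q | w q = true}, hw.symm, hle.trans_eq ?_⟩
  have ht := addOrderOf_pos k
  rw [← hw, filter_congr fun w' _ => Nat.mul_left_cancel_iff ht, card_filter_card_eq_choose,
    ← Nat.card_eq_fintype_card, natCard_quotient_zmultiples]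

theorem fixCount_mul_pow_le (hℓ : 0 < ℓ) (hℓn : ℓ < n) {k : ZMod n}
    (hF : FixCount n ℓ k ≠ 0) :
    2 ≤ n / addOrderOf k ∧
      FixCount n ℓ k * (n / addOrderOf k) ^ (addOrderOf k - 1) ≤ n.choose ℓ := by
  obtain ⟨m, hℓm, hFm⟩ := exists_fixCount_le_choose hF
  set t := addOrderOf k
  set d := n / t
  have ht : 0 < t := addOrderOf_pos k
  have hdt : d * t = n := div_addOrderOf_mul k
  have hm : 0 < m := Nat.pos_of_mul_pos_left (hℓm ▸ hℓ)
  have hmd : m < d :=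
    Nat.lt_of_mul_lt_mul_left (a := t) (by rw [← hℓm, mul_comm, hdt]; exact hℓn)
  refine ⟨by omega, ?_⟩
  calc FixCount n ℓ k * d ^ (t - 1) ≤ d.choose m * d.choose m ^ (t - 1) :=
        Nat.mul_le_mul hFm (Nat.pow_le_pow_left (Nat.le_choose_of_pos_of_lt hm hmd) _)
    _ = d.choose m ^ t := by rw [← pow_succ', Nat.sub_add_cancel ht]
    _ ≤ (d * t).choose (m * t) := Nat.choose_pow_le_choose_mul_mul d m t
    _ = n.choose ℓ := by rw [hdt, hℓm, mul_comm]

theorem sq_mul_fixCount_le (hℓ : 0 < ℓ) (hℓn : ℓ < n) {k : ZMod n} (hk : k ≠ 0)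
    (h2k : 2 • k ≠ 0) :
    n ^ 2 * FixCount n ℓ k ≤ 32 * n.choose ℓ := by
  rcases eq_or_ne (FixCount n ℓ k) 0 with hF | hF
  · simp [hF]
  obtain ⟨hd, hle⟩ := fixCount_mul_pow_le hℓ hℓn hF
  have ht : 3 ≤ addOrderOf k := by
    have h0 := addOrderOf_pos k
    have h1 : addOrderOf k ≠ 1 := fun h => hk (AddMonoid.addOrderOf_eq_one_iff.1 h)
    have h2 : addOrderOf k ≠ 2 := fun h => h2k (h ▸ addOrderOf_nsmul_eq_zero k)
    omega
  calc n ^ 2 * FixCount n ℓ k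
      = (n / addOrderOf k * addOrderOf k) ^ 2 * FixCount n ℓ k := by
        rw [div_addOrderOf_mul k]
    _ ≤ 32 * (n / addOrderOf k) ^ (addOrderOf k - 1) * FixCount n ℓ k :=
        Nat.mul_le_mul_right _ (sq_mul_le_pow hd ht)
    _ = 32 * (FixCount n ℓ k * (n / addOrderOf k) ^ (addOrderOf k - 1)) := by ring
    _ ≤ 32 * n.choose ℓ := Nat.mul_le_mul_left _ hle

theorem mul_fixCount_le (hℓ : 0 < ℓ) (hℓn : ℓ < n) {k : ZMod n} (hk : k ≠ 0)
    (h2k : 2 • k = 0) :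
    n * FixCount n ℓ k ≤ 2 * n.choose ℓ := by
  rcases eq_or_ne (FixCount n ℓ k) 0 with hF | hF
  · simp [hF]
  have ht : addOrderOf k = 2 := addOrderOf_eq_prime h2k hk
  have hle := (fixCount_mul_pow_le hℓ hℓn hF).2
  have hn : n / 2 * 2 = n := ht ▸ div_addOrderOf_mul k
  rw [ht] at hle
  calc n * FixCount n ℓ k = 2 * (FixCount n ℓ k * (n / 2) ^ (2 - 1)) := by
        nth_rewrite 1 [← hn]; ring
    _ ≤ 2 * n.choose ℓ := Nat.mul_le_mul_left _ hle

theorem mul_sum_fixCount_erase_zero_le (hℓ : 0 < ℓ) (hℓn : ℓ < n) :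
    n * ∑ k ∈ univ.erase 0, FixCount n ℓ k ≤ 34 * n.choose ℓ := by
  rw [← sum_filter_add_sum_filter_not _ (fun k : ZMod n => 2 • k = 0), mul_add]
  have hA : #{k ∈ univ.erase (0 : ZMod n) | 2 • k = 0} ≤ 1 := by
    have := IsAddCyclic.card_nsmul_eq_zero_le (α := ZMod n) two_pos
    rw [filter_erase, card_erase_of_mem (by simp)]
    omega
  set A := {k ∈ univ.erase (0 : ZMod n) | 2 • k = 0}
  set B := {k ∈ univ.erase (0 : ZMod n) | ¬2 • k = 0}
  have hB : #B ≤ n := (card_le_univ B).trans_eq (ZMod.card n)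
  have sumA : n * ∑ k ∈ A, FixCount n ℓ k ≤ 2 * n.choose ℓ :=
    calc n * ∑ k ∈ A, FixCount n ℓ k ≤ ∑ _k ∈ A, 2 * n.choose ℓ := by
          rw [mul_sum]
          refine sum_le_sum fun k hk => ?_
          obtain ⟨hk, h2k⟩ := mem_filter.1 hk
          exact mul_fixCount_le hℓ hℓn (ne_of_mem_erase hk) h2k
      _ ≤ 2 * n.choose ℓ := by
          rw [sum_const, smul_eq_mul]; exact (Nat.mul_le_mul_right _ hA).trans_eq (one_mul _)
  have sumB : n * (n * ∑ k ∈ B, FixCount n ℓ k) ≤ n * (32 * n.choose ℓ) :=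
    calc n * (n * ∑ k ∈ B, FixCount n ℓ k) ≤ ∑ _k ∈ B, 32 * n.choose ℓ := by
          rw [← mul_assoc, ← sq, mul_sum]
          refine sum_le_sum fun k hk => ?_
          obtain ⟨hk, h2k⟩ := mem_filter.1 hk
          exact sq_mul_fixCount_le hℓ hℓn (ne_of_mem_erase hk) h2k
      _ ≤ n * (32 * n.choose ℓ) := by
          rw [sum_const, smul_eq_mul]; exact Nat.mul_le_mul_right _ hB
  have := Nat.le_of_mul_le_mul_left sumB (NeZero.pos n)
  omega

end Rotation

/-- Theorem 1 of the paper: the normalized orbit count `n·Orb(n,ℓ)/C(n,ℓ)` tends to 1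
as `n → ∞`, uniformly over `1 ≤ ℓ ≤ n - 1`. -/
theorem stmt_0 :
    ∀ ε : ℝ, 0 < ε → ∃ N : ℕ, ∀ (n ℓ : ℕ), N ≤ n → ∀ (h1 : 1 ≤ ℓ) (h2 : ℓ ≤ n - 1),
      haveI : NeZero n := ⟨by omega⟩
      |((n * Orb n ℓ : ℕ) : ℝ) / ((n.choose ℓ : ℕ) : ℝ) - 1| < ε := by
  intro ε hε
  refine ⟨⌈34 / ε⌉₊ + 1, fun n ℓ hn h1 h2 => ?_⟩
  have : NeZero n := ⟨by omega⟩
  have hE := mul_sum_fixCount_erase_zero_le (n := n) h1 (by omega)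
  have hC : (0 : ℝ) < n.choose ℓ := by exact_mod_cast Nat.choose_pos (by omega)
  have hn : 34 / ε < n := Nat.lt_of_ceil_lt (by omega)
  rw [mul_orb_eq_sum_fixCount, ← add_sum_erase _ _ (mem_univ 0), fixCount_zero]
  set E := ∑ k ∈ univ.erase 0, FixCount n ℓ k
  have hnpos : (0 : ℝ) < n := Nat.cast_pos.2 (NeZero.pos n)
  calc |((n.choose ℓ + E : ℕ) : ℝ) / (n.choose ℓ : ℕ) - 1| = E / n.choose ℓ := by
        rw [Nat.cast_add, add_div, div_self hC.ne', add_sub_cancel_left,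
          abs_of_nonneg (by positivity)]
    _ ≤ 34 / n := by
        rw [div_le_div_iff₀ hC hnpos]
        exact_mod_cast (mul_comm _ _).trans_le hE
    _ < ε := by rwa [div_lt_iff₀ hnpos, mul_comm, ← div_lt_iff₀ hε]
end

section
/- Let n and ℓ be integers with 3 ≤ ℓ ≤ ⌊n/2⌋, and let χ ≥ 2 be an integer dividing both n and ℓ. Then C(n/χ, ℓ/χ) ≤ C(⌊n/2⌋, ⌊ℓ/2⌋). -/
lemma choose_mono_k (m : ℕ) : ∀ b a : ℕ, a ≤ b → 2 * b ≤ m →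
    m.choose a ≤ m.choose b := by
  intro b
  induction b with
  | zero => intro a ha _; simp [Nat.le_zero.mp ha]
  | succ b ih =>
    intro a ha hm
    rcases Nat.lt_or_ge a (b+1) with h | h
    · have h1 : a ≤ b := Nat.lt_succ_iff.mp h
      calc m.choose a ≤ m.choose b := ih a h1 (by omega)
        _ ≤ m.choose (b+1) := Nat.choose_le_succ_of_lt_half_left (by omega)
    · have : a = b + 1 := le_antisymm ha h
      simp [this]

/-- Eq. (28) of the paper: for `3 ≤ ℓ ≤ ⌊n/2⌋` and a common divisor `χ ≥ 2` of `n` and `ℓ`,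
`C(n/χ, ℓ/χ) ≤ C(⌊n/2⌋, ⌊ℓ/2⌋)`. -/
theorem stmt_3 (n ℓ χ : ℕ) (hℓ3 : 3 ≤ ℓ) (hℓn : ℓ ≤ n / 2) (hχ : 2 ≤ χ)
    (hχn : χ ∣ n) (hχℓ : χ ∣ ℓ) :
    (n / χ).choose (ℓ / χ) ≤ (n / 2).choose (ℓ / 2) := by
  have h1 : n / χ ≤ n / 2 := Nat.div_le_div_left hχ (by norm_num)
  have h2 : ℓ / χ ≤ ℓ / 2 := Nat.div_le_div_left hχ (by norm_num)
  calc (n / χ).choose (ℓ / χ) ≤ (n / 2).choose (ℓ / χ) :=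
        Nat.choose_le_choose _ h1
    _ ≤ (n / 2).choose (ℓ / 2) :=
        choose_mono_k _ _ _ h2 (by omega)
end

section
/- Let n and ℓ be integers with 3 ≤ ℓ ≤ ⌊n/2⌋, and let k be an integer with 1 ≤ k ≤ n - 1, regarded as an element of ZMod n. Then Fix(n,ℓ,k) ≤ C(⌊n/2⌋, ⌊ℓ/2⌋). -/
/-! A configuration fixed by the rotation by `k ≠ 0` is periodic with period `k`, hence constant
on the cosets of `H = ⟨k⟩`: its set of `true` positions is the preimage of a set `T` of cosets,
and `ℓ = |H| * |T|`. So it is determined by an `ℓ / |H|`-subset of the `n / |H|` cosets. Since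
`|H| ≥ 2`, there are at most `n / 2` cosets and `ℓ / |H| ≤ ℓ / 2 ≤ (n / 2) / 2`, a range in which
`C(n / 2, ·)` is increasing. -/

open Finset Function AddSubgroup

theorem Nat.choose_le_choose_of_le_half {n a b : ℕ} (hab : a ≤ b) (hb : b ≤ n / 2) :
    n.choose a ≤ n.choose b := by
  induction b, hab using Nat.le_induction with
  | base => exact le_rfl
  | succ b _ ih => exact (ih (by omega)).trans (Nat.choose_le_succ_of_lt_half_left (by omega))

theorem QuotientAddGroup.card_preimage_mk {G : Type*} [AddGroup G] (H : AddSubgroup G)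
    (t : Set (G ⧸ H)) : Nat.card (QuotientAddGroup.mk ⁻¹' t) = Nat.card H * Nat.card t := by
  rw [← Nat.card_prod, Nat.card_congr (QuotientAddGroup.preimageMkEquivAddSubgroupProdSet _ _)]

section Periodic

variable {G : Type*} [AddGroup G] {k : G}

theorem AddSubgroup.two_le_card_zmultiples [Finite G] (hk : k ≠ 0) :
    2 ≤ Nat.card (zmultiples k) := by
  rw [Nat.card_zmultiples]
  have hpos := addOrderOf_pos k
  have hne : addOrderOf k ≠ 1 := by rwa [Ne, AddMonoid.addOrderOf_eq_one_iff]
  omega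

theorem Function.Periodic.apply_eq_of_mk_eq {α : Type*} {v : G → α} (hv : Periodic v k) {x y : G}
    (h : (x : G ⧸ zmultiples k) = y) : v x = v y := by
  obtain ⟨m, hm⟩ := mem_zmultiples_iff.mp (QuotientAddGroup.eq.mp h)
  calc v x = v (x + m • k) := (hv.zsmul m x).symm
    _ = v y := by rw [hm, add_neg_cancel_left]

variable [Fintype G] [DecidableEq (G ⧸ zmultiples k)]

variable (k) in
def trueCosets (v : G → Bool) : Finset (G ⧸ zmultiples k) :=
  ({x | v x = true} : Finset G).image QuotientAddGroup.mk

variable {v : G → Bool}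

theorem Function.Periodic.eq_true_iff_mk_mem_trueCosets (hv : Periodic v k) (x : G) :
    v x = true ↔ (x : G ⧸ zmultiples k) ∈ trueCosets k v := by
  simp only [trueCosets, mem_image, mem_filter, mem_univ, true_and]
  exact ⟨fun hx => ⟨x, hx, rfl⟩, fun ⟨y, hy, hyx⟩ => (hv.apply_eq_of_mk_eq hyx).symm.trans hy⟩

theorem Function.Periodic.card_filter_eq_true (hv : Periodic v k) :
    #{x | v x = true} = Nat.card (zmultiples k) * #(trueCosets k v) := by
  have hpre : QuotientAddGroup.mk ⁻¹' (↑(trueCosets k v) : Set (G ⧸ zmultiples k))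
      = (↑({x | v x = true} : Finset G) : Set G) := by
    ext x
    simp only [Set.mem_preimage, mem_coe, ← hv.eq_true_iff_mk_mem_trueCosets, mem_filter, mem_univ,
      true_and]
  simpa only [hpre, Nat.card_coe_set_eq, Set.ncard_coe_finset] using
    QuotientAddGroup.card_preimage_mk (zmultiples k) (trueCosets k v)

theorem Function.Periodic.eq_of_trueCosets_eq {v w : G → Bool} (hv : Periodic v k)
    (hw : Periodic w k) (h : trueCosets k v = trueCosets k w) : v = w := by
  funext x
  rw [Bool.eq_iff_iff, hv.eq_true_iff_mk_mem_trueCosets, hw.eq_true_iff_mk_mem_trueCosets, h]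

end Periodic

theorem card_le_choose_of_periodic {G : Type*} [AddGroup G] [Fintype G] {k : G} {ℓ : ℕ}
    (s : Finset (G → Bool)) (hs : ∀ v ∈ s, Periodic v k ∧ #{x | v x = true} = ℓ) :
    #s ≤ (Nat.card (G ⧸ zmultiples k)).choose (ℓ / Nat.card (zmultiples k)) := by
  classical
  have hH : 0 < Nat.card (zmultiples k) := Nat.card_pos
  calc #s ≤ #(powersetCard (ℓ / Nat.card (zmultiples k)) (univ : Finset (G ⧸ zmultiples k))) := by
        refine card_le_card_of_injOn (trueCosets k) (fun v hv => ?_)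
          (fun v hv w hw => (hs v hv).1.eq_of_trueCosets_eq (hs w hw).1)
        obtain ⟨hper, hcard⟩ := hs v hv
        rw [mem_coe, mem_powersetCard, ← hcard, hper.card_filter_eq_true,
          Nat.mul_div_cancel_left _ hH]
        exact ⟨subset_univ _, rfl⟩
    _ = _ := by rw [card_powersetCard, card_univ, ← Nat.card_eq_fintype_card]

theorem card_le_choose_half_of_periodic {G : Type*} [AddGroup G] [Fintype G] {k : G} (hk : k ≠ 0)
    {ℓ : ℕ} (hℓ : ℓ ≤ Nat.card G / 2)
    (s : Finset (G → Bool)) (hs : ∀ v ∈ s, Periodic v k ∧ #{x | v x = true} = ℓ) :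
    #s ≤ (Nat.card G / 2).choose (ℓ / 2) := by
  have h2 := two_le_card_zmultiples hk
  have hG := card_eq_card_quotient_mul_card_addSubgroup (zmultiples k)
  have hquot : Nat.card (G ⧸ zmultiples k) ≤ Nat.card G / 2 :=
    (Nat.le_div_iff_mul_le two_pos).mpr (hG ▸ Nat.mul_le_mul_left _ h2)
  calc #s ≤ (Nat.card (G ⧸ zmultiples k)).choose (ℓ / Nat.card (zmultiples k)) :=
        card_le_choose_of_periodic s hs
    _ ≤ (Nat.card G / 2).choose (ℓ / Nat.card (zmultiples k)) := Nat.choose_le_choose _ hquot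
    _ ≤ (Nat.card G / 2).choose (ℓ / 2) :=
        Nat.choose_le_choose_of_le_half (Nat.div_le_div_left h2 two_pos) (by omega)

theorem rot_eq_self_iff {n : ℕ} {k : ZMod n} {v : ZMod n → Bool} :
    rot n k v = v ↔ Periodic v k := by
  refine ⟨fun h x => ?_, fun h => funext fun i => ?_⟩
  · simpa [rot] using (congrFun h (x + k)).symm
  · simpa [rot] using (h (i - k)).symm

/-- Any nontrivial rotation fixes at most `C(⌊n/2⌋, ⌊ℓ/2⌋)` configurations of `Sconf n ℓ`
when `3 ≤ ℓ ≤ ⌊n/2⌋`. -/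
theorem stmt_4 (n ℓ k : ℕ) (hℓn : ℓ ≤ n / 2) (hk1 : 1 ≤ k) (hkn : k ≤ n - 1) :
    haveI : NeZero n := ⟨by omega⟩
    FixCount n ℓ (k : ZMod n) ≤ (n / 2).choose (ℓ / 2) := by
  have : NeZero n := ⟨by omega⟩
  have hk : (k : ZMod n) ≠ 0 := by
    rw [Ne, ZMod.natCast_eq_zero_iff]
    exact Nat.not_dvd_of_pos_of_lt hk1 (by omega)
  have hfix := card_le_choose_half_of_periodic hk (ℓ := ℓ) (by rwa [Nat.card_zmod])
    ((Sconf n ℓ).filter fun v => rot n k v = v) fun v hv => by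
      simp only [Sconf, mem_filter, mem_univ, true_and] at hv
      exact ⟨rot_eq_self_iff.mp hv.2, hv.1⟩
  rwa [Nat.card_zmod] at hfix
end

section
/- Let (ℓ_n) be a sequence of integers with 1 ≤ ℓ_n ≤ n - 1 such that ℓ_n → ∞ and n - ℓ_n → ∞. Put s_n = (2·ℓ_n - n)/n ∈ (-1, 1) and D_n = ((1 + s_n)^{1 + s_n + 1/n} · (1 - s_n)^{1 - s_n + 1/n})^{-n/2} (real powers of positive reals). Then the ratio C(n, ℓ_n) / (2^n · √(2/(π·n)) · D_n) tends to 1 as n → ∞. Equivalently, C(n, ℓ_n)/n is asymptotic to 2^n · √(2/(π·n³)) · D_n. -/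
open Filter Real Stirling Nat

set_option linter.unreachableTactic false
set_option linter.unusedTactic false

lemma lemA (a b : ℝ) (ha : 0 < a) (hb : 0 < b) :
    (2:ℝ) ^ (a+b) * Real.sqrt (2 / (π * (a+b))) *
      ((2*a/(a+b)) ^ ((2*a+1)/(a+b)) * (2*b/(a+b)) ^ ((2*b+1)/(a+b))) ^ (-(a+b)/2)
    = Real.sqrt ((a+b)/(2*π*a*b)) * ((a+b) ^ (a+b) / (a ^ a * b ^ b)) := by
  have hN : (0:ℝ) < a + b := by linarith
  have hπ : (0:ℝ) < π := Real.pi_pos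
  have h1 : (0:ℝ) < 2*a/(a+b) := by positivity
  have h2 : (0:ℝ) < 2*b/(a+b) := by positivity
  have hL : (0:ℝ) < (2:ℝ) ^ (a+b) * Real.sqrt (2 / (π * (a+b))) *
      ((2*a/(a+b)) ^ ((2*a+1)/(a+b)) * (2*b/(a+b)) ^ ((2*b+1)/(a+b))) ^ (-(a+b)/2) := by
    positivity
  have hR : (0:ℝ) < Real.sqrt ((a+b)/(2*π*a*b)) * ((a+b) ^ (a+b) / (a ^ a * b ^ b)) := by
    positivity
  have e1 : Real.log (2 / (π * (a+b))) = Real.log 2 - (Real.log π + Real.log (a+b)) := by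
    rw [Real.log_div (by positivity) (by positivity), Real.log_mul (by positivity) (by positivity)]
  have e2 : Real.log (2*a/(a+b)) = Real.log 2 + Real.log a - Real.log (a+b) := by
    rw [Real.log_div (by positivity) (by positivity), Real.log_mul (by positivity) (by positivity)]
  have e3 : Real.log (2*b/(a+b)) = Real.log 2 + Real.log b - Real.log (a+b) := by
    rw [Real.log_div (by positivity) (by positivity), Real.log_mul (by positivity) (by positivity)]
  have e4 : Real.log ((a+b)/(2*π*a*b)) =
      Real.log (a+b) - (Real.log 2 + Real.log π + Real.log a + Real.log b) := by
    rw [Real.log_div (by positivity) (by positivity), Real.log_mul (by positivity) (by positivity),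
      Real.log_mul (by positivity) (by positivity), Real.log_mul (by positivity) (by positivity)]
  have hLlog : Real.log ((2:ℝ) ^ (a+b) * Real.sqrt (2 / (π * (a+b))) *
      ((2*a/(a+b)) ^ ((2*a+1)/(a+b)) * (2*b/(a+b)) ^ ((2*b+1)/(a+b))) ^ (-(a+b)/2)) =
      (a+b)*Real.log 2 + (Real.log 2 - (Real.log π + Real.log (a+b)))/2 +
      (-(a+b)/2) * ((2*a+1)/(a+b)*(Real.log 2 + Real.log a - Real.log (a+b)) +
        (2*b+1)/(a+b)*(Real.log 2 + Real.log b - Real.log (a+b))) := by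
    rw [Real.log_mul (by positivity) (by positivity), Real.log_mul (by positivity) (by positivity),
      Real.log_rpow two_pos, Real.log_sqrt (by positivity), e1,
      Real.log_rpow (by positivity), Real.log_mul (by positivity) (by positivity),
      Real.log_rpow h1, Real.log_rpow h2, e2, e3]
  have hRlog : Real.log (Real.sqrt ((a+b)/(2*π*a*b)) * ((a+b) ^ (a+b) / (a ^ a * b ^ b))) =
      (Real.log (a+b) - (Real.log 2 + Real.log π + Real.log a + Real.log b))/2 +
      ((a+b)*Real.log (a+b) - (a*Real.log a + b*Real.log b)) := by
    rw [Real.log_mul (by positivity) (by positivity), Real.log_sqrt (by positivity), e4,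
      Real.log_div (by positivity) (by positivity), Real.log_rpow hN,
      Real.log_mul (by positivity) (by positivity), Real.log_rpow ha, Real.log_rpow hb]
  rw [← Real.exp_log hL, ← Real.exp_log hR, hLlog, hRlog]
  congr 1
  field_simp
  ring

lemma lemB (l m : ℕ) (hl : 1 ≤ l) (hm : 1 ≤ m) :
    (((l+m).choose l : ℕ) : ℝ) /
      (Real.sqrt (((l:ℝ)+m)/(2*π*l*m)) * (((l:ℝ)+m) ^ (l+m) / ((l:ℝ)^l * (m:ℝ)^m)))
    = Real.sqrt π * stirlingSeq (l+m) / (stirlingSeq l * stirlingSeq m) := by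
  have hl0 : (0:ℝ) < l := by exact_mod_cast hl
  have hm0 : (0:ℝ) < m := by exact_mod_cast hm
  have hπ : (0:ℝ) < π := Real.pi_pos
  have hn0 : (0:ℝ) < (l:ℝ) + m := by linarith
  have hfact : ((l+m)! : ℝ) = ((l+m).choose l : ℝ) * (l ! : ℝ) * (m ! : ℝ) := by
    rw [← Nat.choose_mul_factorial_mul_factorial (Nat.le_add_right l m)]
    push_cast [Nat.add_sub_cancel_left]
    ring
  -- key sqrt identity
  have key : Real.sqrt (((l:ℝ)+m)/(2*π*l*m)) * Real.sqrt π * Real.sqrt (2*l) * Real.sqrt (2*m)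
      = Real.sqrt (2*((l:ℝ)+m)) := by
    rw [← Real.sqrt_mul (by positivity), ← Real.sqrt_mul (by positivity),
      ← Real.sqrt_mul (by positivity)]
    congr 1
    field_simp
  have hst : ∀ k : ℕ, 1 ≤ k → stirlingSeq k = (k ! : ℝ) / (Real.sqrt (2*k) * ((k:ℝ)/Real.exp 1)^k) := by
    intro k hk
    rfl
  have hcast : ((l:ℝ)+m) = ((l+m : ℕ) : ℝ) := by push_cast; ring
  rw [hst _ hl, hst _ hm, hst _ (by omega : 1 ≤ l + m), hfact]
  have hsl : (0:ℝ) < Real.sqrt (2*l) := by positivity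
  have hsm : (0:ℝ) < Real.sqrt (2*m) := by positivity
  have hsn : (0:ℝ) < Real.sqrt (2*((l:ℝ)+m)) := by positivity
  have hsn' : Real.sqrt (2*((l+m:ℕ):ℝ)) = Real.sqrt (2*((l:ℝ)+m)) := by rw [← hcast]
  have hfl : (0:ℝ) < (l ! : ℝ) := by exact_mod_cast Nat.factorial_pos l
  have hfm : (0:ℝ) < (m ! : ℝ) := by exact_mod_cast Nat.factorial_pos m
  have hch : (0:ℝ) < ((l+m).choose l : ℝ) := by
    exact_mod_cast Nat.choose_pos (Nat.le_add_right l m)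
  have he : (0:ℝ) < Real.exp 1 := Real.exp_pos 1
  have hen : (Real.exp 1)^(l+m) = (Real.exp 1)^l * (Real.exp 1)^m := by rw [pow_add]
  rw [hsn', ← key]
  push_cast
  rw [div_pow, div_pow, div_pow, hen]
  field_simp

/-- Stirling-formula asymptotic: for a sequence `1 ≤ ℓ_n ≤ n - 1` with `ℓ_n → ∞` and
`n - ℓ_n → ∞`, setting `s_n = (2ℓ_n - n)/n` and
`D_n = ((1+s_n)^(1+s_n+1/n) (1-s_n)^(1-s_n+1/n))^(-n/2)`,
the ratio `C(n,ℓ_n) / (2^n √(2/(πn)) D_n)` tends to `1`. -/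
theorem stmt_9 (ℓ : ℕ → ℕ) (hℓ : ∀ n, 2 ≤ n → 1 ≤ ℓ n ∧ ℓ n ≤ n - 1)
    (h1 : Tendsto ℓ atTop atTop)
    (h2 : Tendsto (fun n => n - ℓ n) atTop atTop) :
    Tendsto (fun n : ℕ =>
      ((n.choose (ℓ n) : ℕ) : ℝ) /
        (2 ^ n * Real.sqrt (2 / (Real.pi * n)) *
          (((1 + ((2 * ℓ n : ℝ) - n) / n) ^
              (1 + ((2 * ℓ n : ℝ) - n) / n + 1 / (n : ℝ)) *
            (1 - ((2 * ℓ n : ℝ) - n) / n) ^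
              (1 - ((2 * ℓ n : ℝ) - n) / n + 1 / (n : ℝ))) ^
            (-(n : ℝ) / 2))))
      atTop (nhds 1) := by
  have hπ : (0:ℝ) < π := Real.pi_pos
  have hstl : Tendsto (fun n => stirlingSeq (ℓ n)) atTop (nhds (Real.sqrt π)) :=
    Stirling.tendsto_stirlingSeq_sqrt_pi.comp h1
  have hstm : Tendsto (fun n => stirlingSeq (n - ℓ n)) atTop (nhds (Real.sqrt π)) :=
    Stirling.tendsto_stirlingSeq_sqrt_pi.comp h2
  have hg : Tendsto (fun n : ℕ => Real.sqrt π * stirlingSeq n /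
      (stirlingSeq (ℓ n) * stirlingSeq (n - ℓ n))) atTop
      (nhds (Real.sqrt π * Real.sqrt π / (Real.sqrt π * Real.sqrt π))) :=
    ((tendsto_const_nhds.mul Stirling.tendsto_stirlingSeq_sqrt_pi).div
      (hstl.mul hstm) (by positivity))
  rw [show Real.sqrt π * Real.sqrt π / (Real.sqrt π * Real.sqrt π) = 1 by
    have : Real.sqrt π ≠ 0 := by positivity
    field_simp] at hg
  refine Tendsto.congr' ?_ hg
  filter_upwards [eventually_ge_atTop 2] with n hn
  obtain ⟨hl1, hl2⟩ := hℓ n hn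
  set l := ℓ n with hldef
  set m := n - l with hmdef
  have hm1 : 1 ≤ m := by omega
  have hlm : l + m = n := by omega
  have hab : ((l:ℝ) + m) = (n:ℝ) := by
    rw [← hlm]; push_cast; ring
  have hl0 : (0:ℝ) < l := by exact_mod_cast hl1
  have hm0 : (0:ℝ) < m := by exact_mod_cast hm1
  have hn0 : (0:ℝ) < (n:ℝ) := by positivity
  have hN : (n:ℝ) ≠ 0 := hn0.ne'
  -- rewrite the denominator pieces
  have c1 : 1 + ((2 * l : ℝ) - n) / n = 2*(l:ℝ)/((l:ℝ)+m) := by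
    rw [hab]; field_simp; all_goals linarith [hab]
  have c2 : 1 - ((2 * l : ℝ) - n) / n = 2*(m:ℝ)/((l:ℝ)+m) := by
    rw [hab]; field_simp; all_goals linarith [hab]
  have c3 : 1 + ((2 * l : ℝ) - n) / n + 1/(n:ℝ) = (2*(l:ℝ)+1)/((l:ℝ)+m) := by
    rw [hab]; field_simp; all_goals linarith [hab]
  have c4 : 1 - ((2 * l : ℝ) - n) / n + 1/(n:ℝ) = (2*(m:ℝ)+1)/((l:ℝ)+m) := by
    rw [hab]; field_simp; all_goals linarith [hab]
  have c5 : -(n:ℝ)/2 = -((l:ℝ)+m)/2 := by rw [hab]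
  have c6 : (2:ℝ)^n = (2:ℝ)^(((l:ℝ)+m)) := by
    rw [hab, Real.rpow_natCast]
  have c7 : Real.sqrt (2/(π*(n:ℝ))) = Real.sqrt (2/(π*((l:ℝ)+m))) := by rw [hab]
  rw [c3, c4, c1, c2, c5, c6, c7, lemA _ _ hl0 hm0]
  have c8 : ((l:ℝ)+m) ^ (((l:ℝ)+m)) = ((l:ℝ)+m) ^ (l+m) := by
    rw [show ((l:ℝ)+(m:ℝ)) = (((l+m : ℕ)):ℝ) by push_cast; ring]
    exact Real.rpow_natCast _ _
  have c9 : (l:ℝ) ^ ((l:ℝ)) = (l:ℝ) ^ l := Real.rpow_natCast _ _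
  have c10 : (m:ℝ) ^ ((m:ℝ)) = (m:ℝ) ^ m := Real.rpow_natCast _ _
  rw [c8, c9, c10, show n.choose l = (l+m).choose l by rw [hlm], lemB l m hl1 hm1, hlm]
end

section
/- Let ρ, U : Matrix I I ℂ satisfy T · ρ = ρ · T and T · U = U · T. Then for all j, j' ∈ ZMod n, trace(U · ρ · Uᴴ · Z j) = trace(U · ρ · Uᴴ · Z j'). That is, for a translationally symmetric input state and a translationally symmetric circuit, the expectation values of the single-qubit Pauli-Z observables are equal on all qubits. -/
open scoped Matrix


/-- The cyclic shift on computational basis states of `n` qubits: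
`shift n x = (i ↦ x (i - 1))`. -/
def shift (n : ℕ) (x : ZMod n → Fin 2) : ZMod n → Fin 2 := fun i => x (i - 1)

/-- The permutation matrix `T` of the cyclic shift: `T` sends the basis vector labelled `y`
to the one labelled `shift n y`. -/
def Tmat (n : ℕ) [NeZero n] : Matrix (ZMod n → Fin 2) (ZMod n → Fin 2) ℂ :=
  fun x y => if x = shift n y then 1 else 0

/-- The Pauli-Z operator on qubit `j`: diagonal with entries `(-1)^(x j)`. -/
def Zmat (n : ℕ) [NeZero n] (j : ZMod n) : Matrix (ZMod n → Fin 2) (ZMod n → Fin 2) ℂ :=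
  Matrix.diagonal fun x => (-1 : ℂ) ^ ((x j : ℕ))

lemma shift_inj (n : ℕ) : Function.Injective (shift n) := by
  intro x y h
  funext i
  have := congrFun h (i + 1)
  simpa [shift] using this

lemma ThT (n : ℕ) [NeZero n] : (Tmat n)ᴴ * Tmat n = 1 := by
  ext x y
  simp only [Matrix.mul_apply, Matrix.conjTranspose_apply, Tmat, Matrix.one_apply]
  simp only [apply_ite (star : ℂ → ℂ), star_one, star_zero]
  rw [Finset.sum_eq_single (shift n x)]
  · by_cases h : x = y
    · simp [h]
    · have hs : ¬ shift n x = shift n y := fun hc => h (shift_inj n hc)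
      simp [h, hs]
  · intro b _ hb
    simp only [hb, if_false, zero_mul]
  · simp

lemma TTh (n : ℕ) [NeZero n] : Tmat n * (Tmat n)ᴴ = 1 := by
  have h := ThT n
  have := mul_eq_one_comm.mp h
  exact this

lemma ZT (n : ℕ) [NeZero n] (j : ZMod n) :
    Zmat n j * Tmat n = Tmat n * Zmat n (j - 1) := by
  ext x y
  simp only [Zmat, Tmat, Matrix.diagonal_mul, Matrix.mul_diagonal]
  by_cases h : x = shift n y
  · simp [h, shift]
  · simp [h]

lemma trace_step (n : ℕ) [NeZero n] (A : Matrix (ZMod n → Fin 2) (ZMod n → Fin 2) ℂ)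
    (hA : Tmat n * A = A * Tmat n) (j : ZMod n) :
    (A * Zmat n (j - 1)).trace = (A * Zmat n j).trace := by
  have e1 : Tmat n * (A * Zmat n (j - 1) * (Tmat n)ᴴ) = A * Zmat n j := by
    calc Tmat n * (A * Zmat n (j - 1) * (Tmat n)ᴴ)
        = (Tmat n * A) * Zmat n (j - 1) * (Tmat n)ᴴ := by noncomm_ring
      _ = A * (Tmat n * Zmat n (j - 1)) * (Tmat n)ᴴ := by rw [hA]; noncomm_ring
      _ = A * (Zmat n j * Tmat n) * (Tmat n)ᴴ := by rw [ZT]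
      _ = A * Zmat n j * (Tmat n * (Tmat n)ᴴ) := by noncomm_ring
      _ = A * Zmat n j := by rw [TTh, Matrix.mul_one]
  have e0 : A * Zmat n (j - 1) * (Tmat n)ᴴ * Tmat n = A * Zmat n (j - 1) := by
    rw [Matrix.mul_assoc (A * Zmat n (j - 1)), ThT, Matrix.mul_one]
  calc (A * Zmat n (j - 1)).trace
      = ((A * Zmat n (j - 1) * (Tmat n)ᴴ) * Tmat n).trace := by rw [e0]
    _ = (Tmat n * (A * Zmat n (j - 1) * (Tmat n)ᴴ)).trace := by rw [Matrix.trace_mul_comm]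
    _ = (A * Zmat n j).trace := by rw [e1]

/-- Eq. (9) of the paper: for a translationally symmetric state `ρ` and circuit `U`,
the expectation values of the single-qubit Pauli-Z observables agree on all qubits. -/
theorem stmt_11 (n : ℕ) [NeZero n]
    (ρ U : Matrix (ZMod n → Fin 2) (ZMod n → Fin 2) ℂ)
    (hρ : Tmat n * ρ = ρ * Tmat n) (hU : Tmat n * U = U * Tmat n) (j j₁ : ZMod n) :
    (U * ρ * Uᴴ * Zmat n j).trace = (U * ρ * Uᴴ * Zmat n j₁).trace := by
  have hUh : Tmat n * Uᴴ = Uᴴ * Tmat n := by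
    have h1 : Uᴴ * (Tmat n)ᴴ = (Tmat n)ᴴ * Uᴴ := by
      rw [← Matrix.conjTranspose_mul, ← Matrix.conjTranspose_mul, hU]
    calc Tmat n * Uᴴ = Tmat n * Uᴴ * ((Tmat n)ᴴ * Tmat n) := by rw [ThT, Matrix.mul_one]
      _ = Tmat n * (Uᴴ * (Tmat n)ᴴ) * Tmat n := by noncomm_ring
      _ = Tmat n * ((Tmat n)ᴴ * Uᴴ) * Tmat n := by rw [h1]
      _ = (Tmat n * (Tmat n)ᴴ) * (Uᴴ * Tmat n) := by noncomm_ring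
      _ = Uᴴ * Tmat n := by rw [TTh, Matrix.one_mul]
  have hA : Tmat n * (U * ρ * Uᴴ) = (U * ρ * Uᴴ) * Tmat n := by
    calc Tmat n * (U * ρ * Uᴴ) = (Tmat n * U) * ρ * Uᴴ := by noncomm_ring
      _ = U * (Tmat n * ρ) * Uᴴ := by rw [hU]; noncomm_ring
      _ = U * ρ * (Tmat n * Uᴴ) := by rw [hρ]; noncomm_ring
      _ = (U * ρ * Uᴴ) * Tmat n := by rw [hUh]; noncomm_ring
  set A := U * ρ * Uᴴ
  have key : ∀ (k : ℕ) (i : ZMod n), (A * Zmat n (i - (k : ZMod n))).trace = (A * Zmat n i).trace := by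
    intro k
    induction k with
    | zero => intro i; simp
    | succ m ih =>
        intro i
        have h1 : i - ((m + 1 : ℕ) : ZMod n) = (i - (m : ZMod n)) - 1 := by
          push_cast; ring
        rw [h1, trace_step n A hA, ih]
  have h2 : j₁ = j - (((j - j₁).val : ℕ) : ZMod n) := by
    rw [ZMod.natCast_val, ZMod.cast_id]; ring
  rw [h2, key]
end
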